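/- arXiv:1606.01778 — 2 statements merged into one kernel-verified Lean document; each statement's English description precedes it below -/
import Mathlib

section
/- Let p(Y) = Y² − 1968·Y + 2654208 and q(Y) = 2·Y²·(Y − 1728)². Then the polynomial F*(Y₀, Y₁, Y₂, Y₃) = q(Y₀)·Y₁·Y₃ − (3/2)·q(Y₀)·Y₂² + p(Y₀)·Y₁⁴ is irreducible in the polynomial ring ℂ[Y₀, Y₁, Y₂, Y₃]. -/
/-!
Viewed as a polynomial in `Y₃` over `ℂ[Y₀, Y₁, Y₂]`, `F*` is linear: `F* = a Y₃ + b` with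
`a = q(Y₀) Y₁` and `b = p(Y₀) Y₁⁴ - (3/2) q(Y₀) Y₂²`, and a linear polynomial with relatively
prime coefficients is irreducible. A common factor of `a` and `b` is prime to `Y₁`, because `Y₁` is
prime and does not divide `b`; it is prime to `q(Y₀)`, because modulo `q(Y₀)` the polynomial `b` is
`p(Y₀) Y₁⁴`, and `p` does not vanish at the roots `0` and `1728` of `q`.
-/

open MvPolynomial

theorem Polynomial.isCoprime_X_sub_C_of_not_isRoot {K : Type*} [Field K] {p : Polynomial K}
    {r : K} (h : ¬ p.IsRoot r) : IsCoprime (Polynomial.X - Polynomial.C r) p :=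
  (Polynomial.irreducible_X_sub_C r).coprime_iff_not_dvd.mpr (mt Polynomial.dvd_iff_isRoot.mp h)

section SchwarzianJ

variable {K : Type*} [Field K] [CharZero K]

theorem isCoprime_schwarzianJ_denominator_numerator :
    IsCoprime ((Polynomial.X : Polynomial K) ^ 2 * (Polynomial.X - 1728) ^ 2)
      (Polynomial.X ^ 2 - 1968 * Polynomial.X + 2654208) := by
  refine .mul_left (.pow_left ?_) (.pow_left ?_)
  · simpa using Polynomial.isCoprime_X_sub_C_of_not_isRoot (r := (0 : K)) (by simp)
  · have h := Polynomial.isCoprime_X_sub_C_of_not_isRoot (r := (1728 : K))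
      (p := Polynomial.X ^ 2 - 1968 * Polynomial.X + 2654208) (by norm_num)
    rwa [map_ofNat] at h

theorem isRelPrime_schwarzianJ_coeffs :
    IsRelPrime (2 * (X 0 ^ 2 * (X 0 - 1728) ^ 2 * X 1) : MvPolynomial (Fin 3) K)
      ((X 0 ^ 2 - 1968 * X 0 + 2654208) * X 1 ^ 4
        + X 0 ^ 2 * (X 0 - 1728) ^ 2 * (-3 * X 2 ^ 2)) := by
  set s : MvPolynomial (Fin 3) K := X 0 ^ 2 * (X 0 - 1728) ^ 2
  set t : MvPolynomial (Fin 3) K := X 0 ^ 2 - 1968 * X 0 + 2654208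
  have hst : IsRelPrime s t := by
    simpa [s, t, map_ofNat] using (isCoprime_schwarzianJ_denominator_numerator.map
      (Polynomial.aeval (R := K) (X 0 : MvPolynomial (Fin 3) K)).toRingHom).isRelPrime
  have hX : Irreducible (X 1 : MvPolynomial (Fin 3) K) := X_prime.irreducible
  have not_dvd {f : MvPolynomial (Fin 3) K} (hf : eval ![1, 0, 1] f ≠ 0) : ¬ X 1 ∣ f :=
    fun h ↦ hf (by simpa using map_dvd (eval ![(1 : K), 0, 1]) h)
  have hXs : IsRelPrime s (X 1) :=
    (hX.isRelPrime_iff_not_dvd.mpr (not_dvd (by norm_num [s]))).symm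
  have h2 : IsUnit (2 : MvPolynomial (Fin 3) K) := by
    simpa only [map_ofNat] using
      (Ne.isUnit (two_ne_zero (α := K))).map (C : K →+* MvPolynomial (Fin 3) K)
  rw [isRelPrime_mul_unit_left_left h2]
  refine .mul_left (.add_mul_left_right (.mul_right hst (.pow_right hXs)) _)
    (hX.isRelPrime_iff_not_dvd.mpr (not_dvd ?_))
  simp [s, t]
  norm_num

/-- `rename (finRotate 4)` moves `Y₃` to the variable that `finSuccEquiv` singles out. -/
theorem finSuccEquiv_rename_finRotate_schwarzianJ :
    finSuccEquiv K 3 (rename (finRotate 4)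
      ((C (2 : K) * X 0 ^ 2 * (X 0 - C 1728) ^ 2) * X 1 * X 3
        - C (3 / 2 : K) * ((C 2 * X 0 ^ 2 * (X 0 - C 1728) ^ 2) * X 2 ^ 2)
        + (X 0 ^ 2 - C 1968 * X 0 + C 2654208) * X 1 ^ 4)) =
    Polynomial.C (2 * (X 0 ^ 2 * (X 0 - 1728) ^ 2 * X 1)) * Polynomial.X
      + Polynomial.C ((X 0 ^ 2 - 1968 * X 0 + 2654208) * X 1 ^ 4
        + X 0 ^ 2 * (X 0 - 1728) ^ 2 * (-3 * X 2 ^ 2)) := by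
  have hC (c : K) : finSuccEquiv K 3 (C c) = Polynomial.C (C c) := by simp [finSuccEquiv_apply]
  have hX1 : finSuccEquiv K 3 (X 1) = Polynomial.C (X 0) := finSuccEquiv_X_succ (j := 0)
  have hX2 : finSuccEquiv K 3 (X 2) = Polynomial.C (X 1) := finSuccEquiv_X_succ (j := 1)
  have hX3 : finSuccEquiv K 3 (X 3) = Polynomial.C (X 2) := finSuccEquiv_X_succ (j := 2)
  have h3 : Polynomial.C (C (3 / 2 : K)) * 2 = (3 : Polynomial (MvPolynomial (Fin 3) K)) := by
    rw [← map_ofNat (Polynomial.C.comp C) 2, ← map_ofNat (Polynomial.C.comp C) 3]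
    simp only [RingHom.comp_apply, ← map_mul]
    norm_num
  simp only [map_add, map_sub, map_mul, map_pow, map_neg, rename_X, rename_C, finRotate_apply,
    Fin.reduceAdd, hC, finSuccEquiv_X_zero, hX1, hX2, hX3, map_ofNat]
  linear_combination (-(Polynomial.C (X 0) ^ 2 * (Polynomial.C (X 0) - 1728) ^ 2 *
    Polynomial.C (X 2) ^ 2 : Polynomial (MvPolynomial (Fin 3) K))) * h3

end SchwarzianJ

/-- With `p(Y) = Y² − 1968Y + 2654208` and `q(Y) = 2Y²(Y − 1728)²`, the polynomial
`F*(Y₀, Y₁, Y₂, Y₃) = q(Y₀)·Y₁·Y₃ − (3/2)·q(Y₀)·Y₂² + p(Y₀)·Y₁⁴` (obtained by clearing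
denominators in the Schwarzian differential equation of the modular `j`-function) is
irreducible in `ℂ[Y₀, Y₁, Y₂, Y₃]`. -/
theorem statement4 :
    Irreducible
      ((C (2 : ℂ) * X 0 ^ 2 * (X 0 - C 1728) ^ 2) * X 1 * X 3
        - C (3 / 2 : ℂ) * ((C 2 * X 0 ^ 2 * (X 0 - C 1728) ^ 2) * X 2 ^ 2)
        + (X 0 ^ 2 - C 1968 * X 0 + C 2654208) * X 1 ^ 4 :
        MvPolynomial (Fin 4) ℂ) := by
  rw [← MulEquiv.irreducible_iff (renameEquiv ℂ (finRotate 4)),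
    ← MulEquiv.irreducible_iff (finSuccEquiv ℂ 3), renameEquiv_apply,
    finSuccEquiv_rename_finRotate_schwarzianJ]
  refine Polynomial.irreducible_C_mul_X_add_C ?_ isRelPrime_schwarzianJ_coeffs
  intro h
  have h1 := congrArg (eval fun _ ↦ (1 : ℂ)) h
  norm_num at h1
end

section
/- Let p(Y) be a polynomial with coefficients in the subfield C(t) of K generated by C ∪ {t}, let q(Y) be a polynomial with coefficients in C, and let u ∈ K be such that p(u) is nonconstant. Then for every k ≥ 0 the element ∂_{p(u)}^k q(u) lies in the subfield C(t)({u, u', …, u^{(k)}}) of K generated by C ∪ {t, u, u', …, u^{(k)}}. -/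
/-- The subfield of constants of a derivation on a field of characteristic zero. -/
def Derivation.constants {K : Type*} [Field K] [CharZero K] (D : Derivation ℚ K K) :
    Subfield K where
  carrier := {x : K | D x = 0}
  mul_mem' := fun {a b} ha hb => by
    simp only [Set.mem_setOf_eq] at *
    rw [D.leibniz, ha, hb, smul_zero, smul_zero, add_zero]
  one_mem' := D.map_one_eq_zero
  add_mem' := fun {a b} ha hb => by
    simp only [Set.mem_setOf_eq] at *
    rw [map_add, ha, hb, add_zero]
  zero_mem' := D.toLinearMap.map_zero
  neg_mem' := fun {a} ha => by
    simp only [Set.mem_setOf_eq] at *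
    rw [map_neg, ha, neg_zero]
  inv_mem' := fun a ha => by
    simp only [Set.mem_setOf_eq] at *
    rw [D.leibniz_inv, ha, smul_zero]

/-- Differentiation with respect to `x`: `∂_x y = y' / x'`. -/
def pderiv {K : Type*} [Field K] [CharZero K] (D : Derivation ℚ K K) (x : K) : K → K :=
  fun y => D y / D x

/-!
Each application of `∂_{p(u)} = D / D(p(u))` raises the order of the jet of `u` needed by one:
a derivation maps the subfield generated by `C`, `t`, `u, …, u^{(k)}` into the subfield generated
by `C`, `t`, `u, …, u^{(k+1)}`, because it does so on the generators (`D c = 0`, `D t = 1`,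
`D u^{(j)} = u^{(j+1)}`) and the quotient rule keeps derivatives of a subfield inside any subfield
containing the derivatives of its generators.
-/

theorem Polynomial.eval_mem_of_coeff_mem {R S : Type*} [CommSemiring R] [SetLike S R]
    [SubsemiringClass S R] {s : S} {p : Polynomial R} {x : R} (hp : ∀ i, p.coeff i ∈ s)
    (hx : x ∈ s) : p.eval x ∈ s := by
  rw [Polynomial.eval_eq_sum_range]
  exact sum_mem fun i _ => mul_mem (hp i) (pow_mem hx i)

theorem Derivation.map_mem_of_mem_closure {R K : Type*} [CommRing R] [Field K] [Algebra R K]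
    (D : Derivation R K K) {S : Set K} {F : Subfield K} (hSF : S ⊆ F)
    (hDS : ∀ s ∈ S, D s ∈ F) {y : K} (hy : y ∈ Subfield.closure S) : D y ∈ F := by
  have hF : ∀ x ∈ Subfield.closure S, x ∈ F := fun x hx => Subfield.closure_le.mpr hSF hx
  induction hy using Subfield.closure_induction with
  | mem x hx => exact hDS x hx
  | one => simp
  | add x y _ _ hx hy => simpa only [map_add] using add_mem hx hy
  | neg x _ hx => simpa only [map_neg] using neg_mem hx
  | inv x hx' hx =>
      rw [D.leibniz_inv, smul_eq_mul]
      exact mul_mem (neg_mem (pow_mem (inv_mem (hF x hx')) 2)) hx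
  | mul x y hx' hy' hx hy =>
      rw [D.leibniz, smul_eq_mul, smul_eq_mul]
      exact add_mem (mul_mem (hF x hx') hy) (mul_mem (hF y hy') hx)

section Jet

variable {K : Type*} [Field K] [CharZero K] (D : Derivation ℚ K K) (t u : K)

def jetGenerators (k : ℕ) : Set K :=
  (D.constants : Set K) ∪ {t} ∪ ((fun j => (⇑D)^[j] u) '' Set.Iic k)

variable {D t u}

theorem jetGenerators_mono {m n : ℕ} (h : m ≤ n) :
    jetGenerators D t u m ⊆ jetGenerators D t u n :=
  Set.union_subset_union_right _ (Set.image_mono (Set.Iic_subset_Iic.mpr h))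

theorem constants_union_singleton_subset_jetGenerators (k : ℕ) :
    (D.constants : Set K) ∪ {t} ⊆ jetGenerators D t u k :=
  Set.subset_union_left

theorem iterate_mem_jetGenerators {j k : ℕ} (h : j ≤ k) :
    (⇑D)^[j] u ∈ jetGenerators D t u k :=
  Or.inr ⟨j, h, rfl⟩

theorem map_mem_closure_jetGenerators_succ (ht : D t = 1) {k : ℕ} {s : K}
    (hs : s ∈ jetGenerators D t u k) :
    D s ∈ Subfield.closure (jetGenerators D t u (k + 1)) := by
  rcases hs with (hc | rfl) | ⟨j, hj, rfl⟩
  · rw [show D s = 0 from hc]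
    exact zero_mem _
  · rw [ht]
    exact one_mem _
  · rw [← Function.iterate_succ_apply' (⇑D) j u]
    exact Subfield.subset_closure (iterate_mem_jetGenerators (Nat.succ_le_succ hj))

theorem map_mem_closure_jetGenerators_succ_of_mem (ht : D t = 1) {k : ℕ} {y : K}
    (hy : y ∈ Subfield.closure (jetGenerators D t u k)) :
    D y ∈ Subfield.closure (jetGenerators D t u (k + 1)) :=
  D.map_mem_of_mem_closure
    ((jetGenerators_mono k.le_succ).trans Subfield.subset_closure)
    (fun _ hs => map_mem_closure_jetGenerators_succ ht hs) hy

end Jet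

theorem statement7_general {K : Type*} [Field K] [CharZero K] (D : Derivation ℚ K K)
    (t : K) (ht : D t = 1)
    (p q : Polynomial K)
    (hp : ∀ i, p.coeff i ∈ Subfield.closure ((D.constants : Set K) ∪ {t}))
    (hq : ∀ i, q.coeff i ∈ D.constants)
    (u : K) :
    ∀ k : ℕ, (pderiv D (Polynomial.eval u p))^[k] (Polynomial.eval u q) ∈
      Subfield.closure ((D.constants : Set K) ∪ {t} ∪ ((fun j => (⇑D)^[j] u) '' Set.Iic k)) := by
  have hu : ∀ k, u ∈ Subfield.closure (jetGenerators D t u k) := fun k =>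
    Subfield.subset_closure (iterate_mem_jetGenerators k.zero_le)
  have hpu : ∀ k, p.eval u ∈ Subfield.closure (jetGenerators D t u k) := fun k =>
    Polynomial.eval_mem_of_coeff_mem
      (fun i => Subfield.closure_mono (constants_union_singleton_subset_jetGenerators k) (hp i))
      (hu k)
  intro k
  induction k with
  | zero =>
    exact Polynomial.eval_mem_of_coeff_mem
      (fun i => Subfield.subset_closure (constants_union_singleton_subset_jetGenerators 0
        (Or.inl (hq i)))) (hu 0)
  | succ k ih =>
    rw [Function.iterate_succ_apply']
    exact div_mem (map_mem_closure_jetGenerators_succ_of_mem ht ih)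
      (map_mem_closure_jetGenerators_succ_of_mem ht (hpu k))

/-- If `p(Y)` has coefficients in `C(t)`, `q(Y)` has coefficients in `C`, and
`p(u)` is nonconstant, then for every `k ≥ 0` the element `∂_{p(u)}^k q(u)` lies in the
subfield `C(t)(u, u', …, u^{(k)})` of `K`. -/
theorem statement7 {K : Type*} [Field K] [CharZero K] (D : Derivation ℚ K K)
    (t : K) (ht : D t = 1)
    (p q : Polynomial K)
    (hp : ∀ i, p.coeff i ∈ Subfield.closure ((D.constants : Set K) ∪ {t}))
    (hq : ∀ i, q.coeff i ∈ D.constants)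
    (u : K) (hu : D (Polynomial.eval u p) ≠ 0) :
    ∀ k : ℕ, (pderiv D (Polynomial.eval u p))^[k] (Polynomial.eval u q) ∈
      Subfield.closure ((D.constants : Set K) ∪ {t} ∪ ((fun j => (⇑D)^[j] u) '' Set.Iic k)) :=
  statement7_general D t ht p q hp hq u
end
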